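/- (Theorem 1, made precise.) Let E be a real inner product space, let L ≥ 0 and C₂ > 0, and let ℓ₁, ℓ₂, … : E → ℝ each be convex and Lipschitz with constant L. For each m ≥ 1 define J_m(Z) = (1/m)·Σ_{v=1}^{m} ℓ_v(Z) + C₂‖Z‖², and suppose Z^m is a global minimizer of J_m for each m. Then for every m ≥ 2, ‖Z^m − Z^{m−1}‖ ≤ 2L/(C₂·m); in particular ‖Z^m − Z^{m−1}‖ = O(1/m). -/

import Mathlib

/-!
Write `A_m = (1/m) ∑_{v ≤ m} ℓ_v`, so `J_m = A_m + C₂‖·‖²` is `2C₂`-strongly convex and at its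
minimizer `C₂‖Z^m - Y‖² ≤ 2 (J_m Y - J_m Z^m)` for every `Y`. Adding this for `J_m` at
`Y = Z^{m-1}` and for `J_{m-1}` at `Y = Z^m`, the quadratic terms cancel and
`C₂‖Z^m - Z^{m-1}‖²` is bounded by the increment of `A_m - A_{m-1} = (ℓ_m - A_{m-1}) / m`
between the two points. That function is `2L/m`-Lipschitz, whence
`C₂‖Z^m - Z^{m-1}‖² ≤ (2L/m) ‖Z^m - Z^{m-1}‖`.
-/
open Finset

section RegularizedMinimizer

variable {E : Type*} [NormedAddCommGroup E] [InnerProductSpace ℝ E] {s : Set E}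

lemma UniformConvexOn.modulus_le_of_isMinOn {φ : ℝ → ℝ} {f : E → ℝ} {x y : E}
    (hf : UniformConvexOn s φ f) (hmin : IsMinOn f s x) (hx : x ∈ s) (hy : y ∈ s) :
    φ ‖x - y‖ ≤ 2 * (f y - f x) := by
  have hhalf : (0 : ℝ) ≤ 1 / 2 := by norm_num
  have hmid := hf.2 hx hy hhalf hhalf (by norm_num)
  have hx_le := isMinOn_iff.1 hmin _ (hf.1 hx hy hhalf hhalf (by norm_num))
  simp only [smul_eq_mul] at hmid
  linarith

lemma ConvexOn.strongConvexOn_add_mul_sq_norm {g : E → ℝ} (hg : ConvexOn ℝ s g) (c : ℝ) :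
    StrongConvexOn s (2 * c) fun z ↦ g z + c * ‖z‖ ^ 2 := by
  rw [strongConvexOn_iff_convex]
  convert hg using 2
  ring

lemma norm_sub_le_of_isMinOn_add_mul_sq_norm {g₁ g₂ : E → ℝ} {c K : ℝ} {x y : E}
    (hc : 0 < c) (hK : 0 ≤ K) (hg₁ : ConvexOn ℝ s g₁) (hg₂ : ConvexOn ℝ s g₂)
    (hx : x ∈ s) (hy : y ∈ s)
    (hx_min : IsMinOn (fun z ↦ g₁ z + c * ‖z‖ ^ 2) s x)
    (hy_min : IsMinOn (fun z ↦ g₂ z + c * ‖z‖ ^ 2) s y)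
    (hLip : ∀ a ∈ s, ∀ b ∈ s, |(g₁ a - g₂ a) - (g₁ b - g₂ b)| ≤ K * ‖a - b‖) :
    ‖x - y‖ ≤ K / c := by
  have h₁ := (hg₁.strongConvexOn_add_mul_sq_norm c).modulus_le_of_isMinOn hx_min hx hy
  have h₂ := (hg₂.strongConvexOn_add_mul_sq_norm c).modulus_le_of_isMinOn hy_min hy hx
  rw [norm_sub_rev y x] at h₂
  have hsq : c * ‖x - y‖ ^ 2 ≤ K * ‖x - y‖ := by
    have hyx := (le_abs_self _).trans (hLip y hy x hx)
    rw [norm_sub_rev] at hyx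
    linarith
  rcases (norm_nonneg (x - y)).eq_or_lt with h | h
  · rw [← h]; positivity
  · rw [le_div_iff₀ hc]
    nlinarith

end RegularizedMinimizer

section RunningAverage

variable {E : Type*} (ℓ : ℕ → E → ℝ)

/-- For `m = 0` this is `0` (as `1 / 0 = 0`), which keeps `runningAverage_succ_sub` valid at
`n = 0`. -/
noncomputable def runningAverage (m : ℕ) (Z : E) : ℝ :=
  (1 / (m : ℝ)) * ∑ v ∈ Icc 1 m, ℓ v Z

variable {ℓ}

lemma convexOn_runningAverage [AddCommGroup E] [Module ℝ E] {s : Set E} (hs : Convex ℝ s)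
    (hℓ : ∀ v, ConvexOn ℝ s (ℓ v)) (m : ℕ) : ConvexOn ℝ s (runningAverage ℓ m) := by
  have hsum : ConvexOn ℝ s (∑ v ∈ Icc 1 m, ℓ v) :=
    Finset.sum_induction _ (ConvexOn ℝ s) (fun _ _ ↦ ConvexOn.add) (convexOn_const 0 hs)
      fun v _ ↦ hℓ v
  have hscaled := hsum.smul (c := 1 / (m : ℝ)) (by positivity)
  simp only [Finset.sum_apply, smul_eq_mul] at hscaled
  exact hscaled

lemma abs_runningAverage_sub_le [SeminormedAddCommGroup E] {L : ℝ} (hL : 0 ≤ L)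
    (hℓ : ∀ v a b, |ℓ v a - ℓ v b| ≤ L * ‖a - b‖) (m : ℕ) (a b : E) :
    |runningAverage ℓ m a - runningAverage ℓ m b| ≤ L * ‖a - b‖ := by
  rcases Nat.eq_zero_or_pos m with rfl | hm
  · simpa [runningAverage] using mul_nonneg hL (norm_nonneg (a - b))
  calc |runningAverage ℓ m a - runningAverage ℓ m b|
      = (1 / (m : ℝ)) * |∑ v ∈ Icc 1 m, (ℓ v a - ℓ v b)| := by
        rw [runningAverage, runningAverage, ← mul_sub, ← Finset.sum_sub_distrib, abs_mul,
          abs_of_pos (by positivity)]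
    _ ≤ (1 / (m : ℝ)) * ∑ v ∈ Icc 1 m, L * ‖a - b‖ := by
        gcongr
        exact (Finset.abs_sum_le_sum_abs _ _).trans (Finset.sum_le_sum fun v _ ↦ hℓ v a b)
    _ = L * ‖a - b‖ := by
        rw [Finset.sum_const, Nat.card_Icc, nsmul_eq_mul]
        field_simp
        simp

lemma runningAverage_succ_sub (n : ℕ) (Z : E) :
    runningAverage ℓ (n + 1) Z - runningAverage ℓ n Z
      = (ℓ (n + 1) Z - runningAverage ℓ n Z) / (n + 1) := by
  rcases Nat.eq_zero_or_pos n with rfl | hn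
  · simp [runningAverage]
  have hn' : (n : ℝ) ≠ 0 := by positivity
  simp only [runningAverage, Finset.sum_Icc_succ_top (Nat.le_add_left 1 n)]
  push_cast
  field_simp
  ring

lemma abs_runningAverage_succ_sub_sub_le [SeminormedAddCommGroup E] {L : ℝ} (hL : 0 ≤ L)
    (hℓ : ∀ v a b, |ℓ v a - ℓ v b| ≤ L * ‖a - b‖) (n : ℕ) (a b : E) :
    |(runningAverage ℓ (n + 1) a - runningAverage ℓ n a)
      - (runningAverage ℓ (n + 1) b - runningAverage ℓ n b)| ≤ 2 * L / (n + 1) * ‖a - b‖ := by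
  rw [runningAverage_succ_sub, runningAverage_succ_sub, ← sub_div, abs_div,
    abs_of_pos (by positivity : (0 : ℝ) < n + 1), div_mul_eq_mul_div, two_mul, add_mul]
  gcongr
  calc |ℓ (n + 1) a - runningAverage ℓ n a - (ℓ (n + 1) b - runningAverage ℓ n b)|
      = |(ℓ (n + 1) a - ℓ (n + 1) b) - (runningAverage ℓ n a - runningAverage ℓ n b)| := by
        ring_nf
    _ ≤ |ℓ (n + 1) a - ℓ (n + 1) b| + |runningAverage ℓ n a - runningAverage ℓ n b| :=
        abs_sub _ _
    _ ≤ L * ‖a - b‖ + L * ‖a - b‖ :=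
        add_le_add (hℓ _ a b) (abs_runningAverage_sub_le hL hℓ n a b)

end RunningAverage

/-- Theorem 1 of the paper, made precise: for convex `L`-Lipschitz
per-view losses and `C₂ > 0`, the minimizers `Z^m` of the streaming-view
objectives `J_m(Z) = (1/m)·Σ_{v=1}^m ℓ_v(Z) + C₂‖Z‖²` satisfy
`‖Z^m − Z^{m−1}‖ ≤ 2L/(C₂·m)`, i.e. `‖Z^m − Z^{m−1}‖ = O(1/m)`. -/
theorem streaming_minimizers_stability
    {E : Type*} [NormedAddCommGroup E] [InnerProductSpace ℝ E]
    (L : ℝ) (hL : 0 ≤ L) (C₂ : ℝ) (hC₂ : 0 < C₂)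
    (ℓ : ℕ → E → ℝ)
    (hConv : ∀ v, ConvexOn ℝ Set.univ (ℓ v))
    (hLip : ∀ v, ∀ Z₁ Z₂ : E, |ℓ v Z₁ - ℓ v Z₂| ≤ L * ‖Z₁ - Z₂‖)
    (J : ℕ → E → ℝ)
    (hJ : ∀ m, 1 ≤ m → ∀ Z : E,
      J m Z = (1 / (m : ℝ)) * ∑ v ∈ Finset.Icc 1 m, ℓ v Z + C₂ * ‖Z‖ ^ 2)
    (Zseq : ℕ → E) (hmin : ∀ m, 1 ≤ m → ∀ Z : E, J m (Zseq m) ≤ J m Z) :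
    ∀ m, 2 ≤ m → ‖Zseq m - Zseq (m - 1)‖ ≤ 2 * L / (C₂ * (m : ℝ)) := by
  have hZmin : ∀ m, 1 ≤ m →
      IsMinOn (fun Z ↦ runningAverage ℓ m Z + C₂ * ‖Z‖ ^ 2) Set.univ (Zseq m) := fun m hm ↦
    isMinOn_univ_iff.2 fun Z ↦ by simpa only [hJ m hm, runningAverage] using hmin m hm Z
  intro m hm
  obtain ⟨n, rfl⟩ : ∃ n, m = n + 1 := ⟨m - 1, by omega⟩
  have hstep := norm_sub_le_of_isMinOn_add_mul_sq_norm hC₂ (by positivity)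
    (convexOn_runningAverage convex_univ hConv (n + 1))
    (convexOn_runningAverage convex_univ hConv n) (Set.mem_univ _) (Set.mem_univ _)
    (hZmin (n + 1) (by omega)) (hZmin n (by omega))
    fun a _ b _ ↦ abs_runningAverage_succ_sub_sub_le hL hLip n a b
  rw [Nat.add_sub_cancel, Nat.cast_succ, mul_comm C₂, ← div_div]
  exact hstep
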